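/- Let W be an n×n nonnegative matrix with irreducible associated graph, L[W] = diag(W1) − W its Laplacian, and μ > 0 the normalized left null vector of L[W]. For any z : Fin n → ℝ with zᵢ > 0, the vector w defined by wᵢ = (μᵢ/zᵢ)/(∑ⱼ μⱼ/zⱼ) satisfies wᵀ·L[diag(z)·W] = 0 and ∑ᵢ wᵢ = 1. -/

import Mathlib

open Finset Matrix

/-- The directed graph of positive entries of `W` is strongly connected. -/
def StronglyConnectedMat {n : ℕ} (W : Matrix (Fin n) (Fin n) ℝ) : Prop :=
  ∀ i j : Fin n, i ≠ j → Relation.TransGen (fun a b => 0 < W a b) i j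

/-! Row `i` of `diag(z) W` sums to `zᵢ (W 1)ᵢ`, so `L[diag(z) W] = diag(z) L[W]`. Hence
`w ᵥ* L[diag(z) W] = (w * z) ᵥ* L[W]`, and `w * z` is a scalar multiple of `μ`. -/

namespace Matrix

variable {ι R : Type*} [Fintype ι] [DecidableEq ι] [CommRing R]

def laplacian (W : Matrix ι ι R) : Matrix ι ι R :=
  diagonal (W *ᵥ 1) - W

theorem laplacian_diagonal_mul (z : ι → R) (W : Matrix ι ι R) :
    laplacian (diagonal z * W) = diagonal z * laplacian W := by
  rw [laplacian, laplacian, mul_sub, ← mulVec_mulVec, diagonal_mul_diagonal]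
  congr 2
  exact funext (mulVec_diagonal z _)

theorem vecMul_diagonal_mul (v z : ι → R) (M : Matrix ι ι R) :
    v ᵥ* (diagonal z * M) = (v * z) ᵥ* M := by
  rw [← vecMul_vecMul]
  congr 1
  exact funext (vecMul_diagonal v z)

end Matrix

theorem rescaled_laplacian_left_null_vector_general (n : ℕ) (hn : 1 ≤ n)
    (W : Matrix (Fin n) (Fin n) ℝ)
    (μ : Fin n → ℝ) (hμpos : ∀ i, 0 < μ i)
    (hμnull : μ ᵥ* (Matrix.diagonal (W.mulVec 1) - W) = 0)
    (z : Fin n → ℝ) (hz : ∀ i, 0 < z i) :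
    (fun i => (μ i / z i) / (∑ j, μ j / z j)) ᵥ*
        (Matrix.diagonal ((Matrix.diagonal z * W).mulVec 1) - Matrix.diagonal z * W) = 0 ∧
    ∑ i, (μ i / z i) / (∑ j, μ j / z j) = 1 := by
  set S := ∑ j, μ j / z j
  have hS : 0 < S :=
    sum_pos (fun j _ => div_pos (hμpos j) (hz j)) ⟨⟨0, hn⟩, mem_univ _⟩
  have hweights : (fun i => μ i / z i / S) * z = S⁻¹ • μ := by
    funext i
    simp only [Pi.mul_apply, Pi.smul_apply, smul_eq_mul]
    field_simp [(hz i).ne']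
  refine ⟨?_, by rw [← sum_div, div_self hS.ne']⟩
  have hμnull' : μ ᵥ* laplacian W = 0 := hμnull
  change _ ᵥ* laplacian (diagonal z * W) = 0
  rw [laplacian_diagonal_mul, vecMul_diagonal_mul, hweights, smul_vecMul, hμnull', smul_zero]

theorem rescaled_laplacian_left_null_vector (n : ℕ) (hn : 1 ≤ n)
    (W : Matrix (Fin n) (Fin n) ℝ)
    (hW : ∀ i j, 0 ≤ W i j) (hirr : StronglyConnectedMat W)
    (μ : Fin n → ℝ) (hμpos : ∀ i, 0 < μ i) (hμsum : ∑ i, μ i = 1)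
    (hμnull : μ ᵥ* (Matrix.diagonal (W.mulVec 1) - W) = 0)
    (z : Fin n → ℝ) (hz : ∀ i, 0 < z i) :
    (fun i => (μ i / z i) / (∑ j, μ j / z j)) ᵥ*
        (Matrix.diagonal ((Matrix.diagonal z * W).mulVec 1) - Matrix.diagonal z * W) = 0 ∧
    ∑ i, (μ i / z i) / (∑ j, μ j / z j) = 1 :=
  rescaled_laplacian_left_null_vector_general n hn W μ hμpos hμnull z hz
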